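/- arXiv:2304.05092 — 2 statements merged into one kernel-verified Lean document; each statement's English description precedes it below -/
import Mathlib

section
/- Let H satisfy (C3), (CNH) and (CVX), let z and K be as above, and let m, M : ℝ × (K,+∞) → ℝ be the unique functions with H(x,m(x,c)) = c, m(x,c) < z(x) and H(x,M(x,c)) = c, M(x,c) > z(x). Define v(c) = sup_{x∈ℝ} ∂ₚH(x, m(x,c)) and V(c) = inf_{x∈ℝ} ∂ₚH(x, M(x,c)) for c > K. Then: (i) v is nonincreasing and V is nondecreasing on (K,+∞); (ii) v(c) → −∞ and V(c) → +∞ as c → +∞. -/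
/-!
Since `∂ₚH(x, ·)` is increasing and vanishes at `z(x)`, `H(x, ·)` decreases on `(-∞, z(x)]` and
increases on `[z(x), ∞)`; hence `m(x, c)` decreases and `M(x, c)` increases with `c`, and so do
the speeds `∂ₚH(x, m(x, c))` and `∂ₚH(x, M(x, c))`; taking `sup`/`inf` over `x` preserves this.

For the limits, `H` is bounded above on every strip `{a ≤ ∂ₚH ≤ b}`: by (CNH) only
`x ∈ [-X, X]` matters, and there a Dini-type compactness argument (`∂ₚH(x, ±n) → ±∞` pointwise
and monotonically) puts the strip inside a compact rectangle. So a high level set `{H = c}` misses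
the strip, which forces `∂ₚH(x, m(x, c)) < a` and `∂ₚH(x, M(x, c)) > b` for all `x`.
-/

open Real Set MeasureTheory Filter Topology

noncomputable section

/-- Partial derivative of `H` in its first (space) variable. -/
def pdx (H : ℝ → ℝ → ℝ) (x p : ℝ) : ℝ := deriv (fun y => H y p) x

/-- Partial derivative of `H` in its second (momentum) variable. -/
def pdp (H : ℝ → ℝ → ℝ) (x p : ℝ) : ℝ := deriv (fun u => H x u) p

/-- (C3) Smoothness: `H ∈ C³(ℝ²; ℝ)`. -/
def CondC3 (H : ℝ → ℝ → ℝ) : Prop := ContDiff ℝ 3 (Function.uncurry H)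

/-- (CNH) Compact non-homogeneity: `∂ₓ H (x,p) = 0` for `|x| ≥ X`. -/
def CondCNH (H : ℝ → ℝ → ℝ) : Prop := ∃ X > (0:ℝ), ∀ x p : ℝ, X ≤ |x| → pdx H x p = 0

/-- (CVX) Strong convexity: for every `x`, `p ↦ ∂ₚ H (x,p)` is an increasing
`C¹`-diffeomorphism of `ℝ` onto itself. -/
def CondCVX (H : ℝ → ℝ → ℝ) : Prop :=
  ∀ x : ℝ, StrictMono (pdp H x) ∧ Function.Bijective (pdp H x) ∧
    ContDiff ℝ 1 (pdp H x) ∧ ContDiff ℝ 1 (Function.invFun (pdp H x))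

open Function

theorem Convex.eq_of_deriv_eq_zero {E : Type*} [NormedAddCommGroup E] [NormedSpace ℝ E]
    {f : ℝ → E} {s : Set ℝ} (hs : Convex ℝ s)
    (hf : Differentiable ℝ f) (hf' : ∀ y ∈ s, deriv f y = 0) {x y : ℝ} (hx : x ∈ s)
    (hy : y ∈ s) : f x = f y := by
  have h := hs.norm_image_sub_le_of_norm_deriv_le (fun y _ => hf y)
    (fun y hy => (congrArg norm (hf' y hy)).trans_le norm_zero.le) hy hx
  rw [zero_mul, norm_le_zero_iff, sub_eq_zero] at h
  exact h

theorem apply_projIcc_of_deriv_eq_zero {f : ℝ → ℝ} (hf : Differentiable ℝ f) {X : ℝ}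
    (hX : 0 ≤ X) (hf' : ∀ y, X ≤ |y| → deriv f y = 0) (x : ℝ) :
    f (projIcc (-X) X (neg_le_self hX) x) = f x := by
  rcases le_total X x with hXx | hxX
  · rw [projIcc_of_right_le _ hXx]
    exact (convex_Ici X).eq_of_deriv_eq_zero hf
      (fun y hy => hf' y (le_trans hy (le_abs_self y))) self_mem_Ici hXx
  rcases le_total x (-X) with hxX' | hXx'
  · rw [projIcc_of_le_left _ hxX']
    exact (convex_Iic (-X)).eq_of_deriv_eq_zero hf
      (fun y hy => hf' y (le_neg.mp hy |>.trans (neg_le_abs y))) self_mem_Iic hxX'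
  · rw [projIcc_of_mem _ ⟨hXx', hxX⟩]

theorem strictAntiOn_Iic_of_strictMono_deriv {f : ℝ → ℝ} (hf : Differentiable ℝ f)
    (hf' : StrictMono (deriv f)) {z : ℝ} (hz : deriv f z = 0) : StrictAntiOn f (Iic z) :=
  strictAntiOn_of_deriv_neg (convex_Iic z) hf.continuous.continuousOn fun p hp => by
    rw [interior_Iic] at hp
    exact hz ▸ hf' hp

theorem strictMonoOn_Ici_of_strictMono_deriv {f : ℝ → ℝ} (hf : Differentiable ℝ f)
    (hf' : StrictMono (deriv f)) {z : ℝ} (hz : deriv f z = 0) : StrictMonoOn f (Ici z) :=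
  strictMonoOn_of_deriv_pos (convex_Ici z) hf.continuous.continuousOn fun p hp => by
    rw [interior_Ici] at hp
    exact hz ▸ hf' hp

theorem IsCompact.exists_forall_lt_and_lt {α : Type*} [TopologicalSpace α] {s : Set α}
    (hs : IsCompact s) {f : α → ℝ → ℝ} (hcont : ∀ p, Continuous fun x => f x p)
    (hmono : ∀ x, Monotone (f x)) (hsurj : ∀ x, Surjective (f x)) (a b : ℝ) :
    ∃ P : ℝ, ∀ x ∈ s, f x (-P) < a ∧ b < f x P := by
  let U : ℕ → Set α := fun n => {x | f x (-n) < a ∧ b < f x n}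
  have hUopen : ∀ n, IsOpen (U n) := fun n =>
    (isOpen_lt (hcont _) continuous_const).inter (isOpen_lt continuous_const (hcont _))
  have hUmono : Monotone U := fun n k hnk x ⟨hxa, hxb⟩ =>
    ⟨(hmono x (neg_le_neg (Nat.cast_le.mpr hnk))).trans_lt hxa,
      hxb.trans_le (hmono x (Nat.cast_le.mpr hnk))⟩
  have hcover : s ⊆ ⋃ n, U n := fun x _ => by
    obtain ⟨p, hp⟩ := hsurj x (a - 1)
    obtain ⟨q, hq⟩ := hsurj x (b + 1)
    obtain ⟨n, hn⟩ := exists_nat_ge (max (-p) q)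
    refine mem_iUnion.mpr ⟨n, ?_, ?_⟩
    · linarith [hmono x (show -(n : ℝ) ≤ p by linarith [le_max_left (-p) q])]
    · linarith [hmono x (show q ≤ n from (le_max_right (-p) q).trans hn)]
  obtain ⟨n, hn⟩ := hs.elim_directed_cover U hUopen hcover hUmono.directed_le
  exact ⟨n, hn⟩

theorem antitoneOn_of_strictAntiOn_of_apply_eq {α β : Type*} [LinearOrder α] [Preorder β]
    {f : α → β} {g : β → α} {s : Set β} {t : Set α}
    (hf : StrictAntiOn f t) (hg : ∀ c ∈ s, g c ∈ t ∧ f (g c) = c) : AntitoneOn g s :=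
  fun c hc c' hc' hcc' => (hf.le_iff_ge (hg c hc).1 (hg c' hc').1).mp <| by
    rw [(hg c hc).2, (hg c' hc').2]
    exact hcc'

theorem monotoneOn_of_strictMonoOn_of_apply_eq {α β : Type*} [LinearOrder α] [Preorder β]
    {f : α → β} {g : β → α} {s : Set β} {t : Set α}
    (hf : StrictMonoOn f t) (hg : ∀ c ∈ s, g c ∈ t ∧ f (g c) = c) : MonotoneOn g s :=
  fun c hc c' hc' hcc' => (hf.le_iff_le (hg c hc).1 (hg c' hc').1).mp <| by
    rw [(hg c hc).2, (hg c' hc').2]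
    exact hcc'

theorem antitoneOn_ciSup {ι α β : Type*} [Preorder α] [ConditionallyCompleteLattice β]
    {g : ι → α → β} {s : Set α}
    (hg : ∀ i, AntitoneOn (g i) s) (hbdd : ∀ c ∈ s, BddAbove (range fun i => g i c)) :
    AntitoneOn (fun c => ⨆ i, g i c) s :=
  fun _ hc _ hc' hcc' => ciSup_mono (hbdd _ hc) fun i => hg i hc hc' hcc'

theorem monotoneOn_ciInf {ι α β : Type*} [Preorder α] [ConditionallyCompleteLattice β]
    {g : ι → α → β} {s : Set α}
    (hg : ∀ i, MonotoneOn (g i) s) (hbdd : ∀ c ∈ s, BddBelow (range fun i => g i c)) :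
    MonotoneOn (fun c => ⨅ i, g i c) s :=
  fun _ hc _ hc' hcc' => ciInf_mono (hbdd _ hc) fun i => hg i hc hc' hcc'

theorem tendsto_ciSup_atBot {ι α β : Type*} [Nonempty ι] [Preorder α]
    [ConditionallyCompleteLattice β] {g : ι → α → β}
    (hg : ∀ r, ∀ᶠ c in atTop, ∀ i, g i c ≤ r) :
    Tendsto (fun c => ⨆ i, g i c) atTop atBot :=
  tendsto_atBot.mpr fun r => (hg r).mono fun _ hc => ciSup_le hc

theorem tendsto_ciInf_atTop {ι α β : Type*} [Nonempty ι] [Preorder α]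
    [ConditionallyCompleteLattice β] {g : ι → α → β}
    (hg : ∀ r, ∀ᶠ c in atTop, ∀ i, r ≤ g i c) :
    Tendsto (fun c => ⨅ i, g i c) atTop atTop :=
  tendsto_atTop.mpr fun r => (hg r).mono fun _ hc => le_ciInf hc

section Hamiltonian

variable {H : ℝ → ℝ → ℝ}

theorem differentiable_apply_left (hH : ContDiff ℝ 1 (uncurry H)) (p : ℝ) :
    Differentiable ℝ fun x => H x p :=
  (hH.differentiable one_ne_zero).comp (differentiable_id.prodMk (differentiable_const p))

theorem differentiable_apply_right (hH : ContDiff ℝ 1 (uncurry H)) (x : ℝ) :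
    Differentiable ℝ (H x) :=
  (hH.differentiable one_ne_zero).comp ((differentiable_const x).prodMk differentiable_id)

theorem continuous_pdp (hH : ContDiff ℝ 1 (uncurry H)) :
    Continuous fun q : ℝ × ℝ => pdp H q.1 q.2 := by
  have hpdp : ∀ q : ℝ × ℝ, pdp H q.1 q.2 = fderiv ℝ (uncurry H) q (0, 1) := fun ⟨x, p⟩ => by
    have hline : HasDerivAt (fun u : ℝ => (x, u)) (0, 1) p :=
      (hasDerivAt_const p x).prodMk (hasDerivAt_id p)
    exact (differentiable_apply_right hH x p).hasDerivAt.unique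
      ((hH.differentiable one_ne_zero (x, p)).hasFDerivAt.comp_hasDerivAt p hline)
  simp only [hpdp]
  exact (ContinuousLinearMap.apply ℝ ℝ ((0 : ℝ), (1 : ℝ))).continuous.comp
    (hH.continuous_fderiv one_ne_zero)

theorem apply_projIcc_of_pdx_eq_zero (hH : ContDiff ℝ 1 (uncurry H)) {X : ℝ} (hX : 0 ≤ X)
    (hCNH : ∀ x p, X ≤ |x| → pdx H x p = 0) (x : ℝ) :
    H (projIcc (-X) X (neg_le_self hX) x) = H x :=
  funext fun p => apply_projIcc_of_deriv_eq_zero (differentiable_apply_left hH p) hX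
    (fun y hy => hCNH y p hy) x

theorem exists_forall_le_of_pdp_mem_Icc (hH : ContDiff ℝ 1 (uncurry H)) {X : ℝ} (hX : 0 ≤ X)
    (hCNH : ∀ x p, X ≤ |x| → pdx H x p = 0) (hmono : ∀ x, StrictMono (pdp H x))
    (hsurj : ∀ x, Surjective (pdp H x)) (a b : ℝ) :
    ∃ C, ∀ x p, pdp H x p ∈ Icc a b → H x p ≤ C := by
  obtain ⟨P, hP⟩ := isCompact_Icc.exists_forall_lt_and_lt
    (fun p => (continuous_pdp hH).comp (continuous_id.prodMk continuous_const))
    (fun x => (hmono x).monotone) hsurj a b (s := Icc (-X) X)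
  obtain ⟨C, hC⟩ := (isCompact_Icc.prod isCompact_Icc).bddAbove_image
    hH.continuous.continuousOn (K := Icc (-X) X ×ˢ Icc (-P) P)
  refine ⟨C, fun x p hp => ?_⟩
  set x' := projIcc (-X) X (neg_le_self hX) x
  have hx : H x' = H x := apply_projIcc_of_pdx_eq_zero hH hX hCNH x
  rw [← hx]
  have hpdp : pdp H x' = pdp H x := by unfold pdp; rw [hx]
  rw [← hpdp] at hp
  obtain ⟨hPa, hPb⟩ := hP x' x'.2
  refine hC ⟨(x', p), ⟨x'.2, ?_, ?_⟩, rfl⟩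
  · exact ((hmono x').lt_iff_lt.mp (hPa.trans_le hp.1)).le
  · exact ((hmono x').lt_iff_lt.mp (hp.2.trans_lt hPb)).le

theorem eventually_forall_pdp_notMem_Icc (hH : ContDiff ℝ 1 (uncurry H)) {X : ℝ} (hX : 0 ≤ X)
    (hCNH : ∀ x p, X ≤ |x| → pdx H x p = 0) (hmono : ∀ x, StrictMono (pdp H x))
    (hsurj : ∀ x, Surjective (pdp H x)) (a b : ℝ) :
    ∀ᶠ c in atTop, ∀ x p, H x p = c → pdp H x p ∉ Icc a b := by
  obtain ⟨C, hC⟩ := exists_forall_le_of_pdp_mem_Icc hH hX hCNH hmono hsurj a b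
  filter_upwards [eventually_gt_atTop C] with c hc x p hp hab
  linarith [hC x p hab]

end Hamiltonian

theorem stmt_4_general (H : ℝ → ℝ → ℝ) (hC3 : CondC3 H) (X : ℝ) (hX : 0 < X)
    (hCNH : ∀ x p : ℝ, X ≤ |x| → pdx H x p = 0) (hCVX : CondCVX H)
    (z : ℝ → ℝ) (hz : ∀ x : ℝ, pdp H x (z x) = 0)
    (K : ℝ)
    (m M : ℝ → ℝ → ℝ)
    (hm : ∀ x c : ℝ, K < c → H x (m x c) = c ∧ m x c < z x)
    (hM : ∀ x c : ℝ, K < c → H x (M x c) = c ∧ z x < M x c) :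
    (AntitoneOn (fun c => sSup {y : ℝ | ∃ x : ℝ, y = pdp H x (m x c)}) (Set.Ioi K) ∧
     MonotoneOn (fun c => sInf {y : ℝ | ∃ x : ℝ, y = pdp H x (M x c)}) (Set.Ioi K)) ∧
    (Tendsto (fun c => sSup {y : ℝ | ∃ x : ℝ, y = pdp H x (m x c)}) atTop atBot ∧
     Tendsto (fun c => sInf {y : ℝ | ∃ x : ℝ, y = pdp H x (M x c)}) atTop atTop) := by
  have hC1 : ContDiff ℝ 1 (uncurry H) := hC3.of_le (by norm_num)
  have hmono : ∀ x, StrictMono (pdp H x) := fun x => (hCVX x).1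
  have hsurj : ∀ x, Surjective (pdp H x) := fun x => (hCVX x).2.1.2
  have hm_nonpos : ∀ x, ∀ c > K, pdp H x (m x c) ≤ 0 := fun x c hc =>
    hz x ▸ (hmono x (hm x c hc).2).le
  have hM_nonneg : ∀ x, ∀ c > K, 0 ≤ pdp H x (M x c) := fun x c hc =>
    hz x ▸ (hmono x (hM x c hc).2).le
  have hrange : ∀ f : ℝ → ℝ, {y | ∃ x, y = f x} = range f := fun f => by ext; simp [eq_comm]
  simp only [hrange]
  refine ⟨⟨antitoneOn_ciSup (fun x => ?_) fun c hc => ⟨0, forall_mem_range.mpr (hm_nonpos · c hc)⟩,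
    monotoneOn_ciInf (fun x => ?_) fun c hc => ⟨0, forall_mem_range.mpr (hM_nonneg · c hc)⟩⟩,
    tendsto_ciSup_atBot fun r => ?_, tendsto_ciInf_atTop fun r => ?_⟩
  · exact (hmono x).monotone.comp_antitoneOn <| antitoneOn_of_strictAntiOn_of_apply_eq
      (strictAntiOn_Iic_of_strictMono_deriv (differentiable_apply_right hC1 x) (hmono x) (hz x))
      fun c hc => ⟨(hm x c hc).2.le, (hm x c hc).1⟩
  · exact (hmono x).monotone.comp_monotoneOn <| monotoneOn_of_strictMonoOn_of_apply_eq
      (strictMonoOn_Ici_of_strictMono_deriv (differentiable_apply_right hC1 x) (hmono x) (hz x))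
      fun c hc => ⟨(hM x c hc).2.le, (hM x c hc).1⟩
  · filter_upwards [eventually_forall_pdp_notMem_Icc hC1 hX.le hCNH hmono hsurj r 0,
      eventually_gt_atTop K] with c hc hcK x
    by_contra! hr
    exact hc x _ (hm x c hcK).1 ⟨hr.le, hm_nonpos x c hcK⟩
  · filter_upwards [eventually_forall_pdp_notMem_Icc hC1 hX.le hCNH hmono hsurj 0 r,
      eventually_gt_atTop K] with c hc hcK x
    by_contra! hr
    exact hc x _ (hM x c hcK).1 ⟨hM_nonneg x c hcK, hr.le⟩

/-- Lemma: the extremal speeds `v(c) = sup_x ∂ₚH(x, m(x,c))` and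
`V(c) = inf_x ∂ₚH(x, M(x,c))` are respectively nonincreasing and nondecreasing on
`(K, +∞)`, with `v(c) → −∞` and `V(c) → +∞` as `c → +∞`. -/
theorem stmt_4 (H : ℝ → ℝ → ℝ) (hC3 : CondC3 H) (X : ℝ) (hX : 0 < X)
    (hCNH : ∀ x p : ℝ, X ≤ |x| → pdx H x p = 0) (hCVX : CondCVX H)
    (z : ℝ → ℝ) (hz : ∀ x : ℝ, pdp H x (z x) = 0)
    (K : ℝ) (hK : IsGreatest (Set.range fun x => H x (z x)) K)
    (m M : ℝ → ℝ → ℝ)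
    (hm : ∀ x c : ℝ, K < c → H x (m x c) = c ∧ m x c < z x)
    (hM : ∀ x c : ℝ, K < c → H x (M x c) = c ∧ z x < M x c) :
    (AntitoneOn (fun c => sSup {y : ℝ | ∃ x : ℝ, y = pdp H x (m x c)}) (Set.Ioi K) ∧
     MonotoneOn (fun c => sInf {y : ℝ | ∃ x : ℝ, y = pdp H x (M x c)}) (Set.Ioi K)) ∧
    (Tendsto (fun c => sSup {y : ℝ | ∃ x : ℝ, y = pdp H x (m x c)}) atTop atBot ∧
     Tendsto (fun c => sInf {y : ℝ | ∃ x : ℝ, y = pdp H x (M x c)}) atTop atTop) :=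
  stmt_4_general H hC3 X hX hCNH hCVX z hz K m M hm hM
end
end

section
/- Let g(x) = 1 − (1 − x²)⁴ for |x| ≤ 1 and g(x) = 1 otherwise, and consider the planar ODE system q̇ = p, ṗ = −g′(q). Let p₀ ∈ [√2, 2) and let (q,p) be the solution with initial datum (0, p₀). Then: (i) if p₀ ∈ (√2, 2), then q is strictly increasing on [0,+∞) and q(t) → +∞ as t → +∞; (ii) if p₀ = √2, then q is strictly increasing and concave on [0,+∞) and q(t) → 1 as t → +∞. -/
/-
The energy `H(q, p) = p² / 2 + g(q)` is conserved. If `p₀ > √2` it exceeds `sup g = 1`, so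
`p²` stays bounded away from `0`, `p` keeps its sign and `q` grows at least linearly. If
`p₀ = √2` the energy is exactly `1`: were `|q| ≥ 1` at some time, `p` would vanish there, at a
rest point of the Lipschitz flow, and uniqueness would make the solution constant, contradicting
`q(0) = 0`. Hence `|q| < 1` and `p² = 2 (1 - g(q)) > 0`, so `q` increases to a limit `L ≤ 1`;
`L < 1` would again bound the speed from below. Concavity holds because `q̈ = -g'(q) ≤ 0` while
`q ≥ 0`.
-/

open Real Set MeasureTheory Filter Topology

noncomputable section

/-- The potential `g(x) = 1 − (1 − x²)⁴` for `|x| ≤ 1`, and `g(x) = 1` otherwise. -/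
def gfun (x : ℝ) : ℝ := if |x| ≤ 1 then 1 - (1 - x ^ 2) ^ 4 else 1

/-- The Hamiltonian `H(x,u) = u²/2 + g(x)` of the example. -/
def Hex (x u : ℝ) : ℝ := u ^ 2 / 2 + gfun x

/-- `(q,p)` solves the planar ODE system `q̇ = p`, `ṗ = −g′(q)`. -/
def SolvesCE (q p : ℝ → ℝ) : Prop :=
  ∀ t : ℝ, HasDerivAt q (p t) t ∧ HasDerivAt p (-(deriv gfun (q t))) t

def gfunDeriv (x : ℝ) : ℝ := if |x| ≤ 1 then 8 * x * (1 - x ^ 2) ^ 3 else 0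

lemma gfun_zero : gfun 0 = 0 := by norm_num [gfun]

lemma gfun_le_one (x : ℝ) : gfun x ≤ 1 := by
  unfold gfun; split_ifs <;> nlinarith [pow_two_nonneg ((1 - x ^ 2) ^ 2)]

lemma gfun_lt_one_of_abs_lt_one {x : ℝ} (hx : |x| < 1) : gfun x < 1 := by
  have : 0 < 1 - x ^ 2 := by nlinarith [sq_abs x, abs_nonneg x]
  rw [gfun, if_pos hx.le]
  linarith [pow_pos this 4]

lemma gfun_eq_one_of_one_le_abs {x : ℝ} (hx : 1 ≤ |x|) : gfun x = 1 := by
  rcases hx.eq_or_lt with h | h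
  · rw [gfun, if_pos h.ge, ← sq_abs, ← h]; norm_num
  · rw [gfun, if_neg h.not_ge]

lemma gfunDeriv_eq_zero_of_one_le_abs {x : ℝ} (hx : 1 ≤ |x|) : gfunDeriv x = 0 := by
  rcases hx.eq_or_lt with h | h
  · rw [gfunDeriv, if_pos h.ge, ← sq_abs, ← h]; norm_num
  · rw [gfunDeriv, if_neg h.not_ge]

lemma gfunDeriv_nonneg {x : ℝ} (hx : 0 ≤ x) : 0 ≤ gfunDeriv x := by
  unfold gfunDeriv
  split_ifs with h
  · have : 0 ≤ 1 - x ^ 2 := by nlinarith [sq_abs x, abs_nonneg x]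
    positivity
  · exact le_rfl

-- At `x = ±1` the two branches of `gfun` meet to fourth order: `|g y - g x| ≤ 16 |y - x|⁴`.
lemma hasDerivAt_gfun_of_abs_eq_one {x : ℝ} (hx : |x| = 1) : HasDerivAt gfun 0 x := by
  have hx2 : x ^ 2 = 1 := by rw [← sq_abs, hx]; norm_num
  rw [hasDerivAt_iff_isLittleO, gfun_eq_one_of_one_le_abs hx.ge]
  refine Asymptotics.IsBigO.trans_isLittleO (g := fun y => ‖y - x‖ ^ 4) ?_
    (Asymptotics.isLittleO_pow_sub_sub x (by norm_num))
  refine Asymptotics.IsBigO.of_bound 16 (Eventually.of_forall fun y => ?_)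
  simp only [smul_zero, sub_zero, Real.norm_eq_abs, norm_pow, abs_abs]
  unfold gfun
  split_ifs with hy
  · have h0 : 0 ≤ 1 - y ^ 2 := by nlinarith [sq_abs y, abs_nonneg y]
    have h2 : 1 - y ^ 2 ≤ 2 * |y - x| := by
      have : 1 - y ^ 2 = (x - y) * (x + y) := by rw [← hx2]; ring
      rw [this, abs_sub_comm]
      have := abs_le.1 hy; have := abs_le.1 hx.le
      nlinarith [abs_mul_abs_self (x - y), le_abs_self (x - y), neg_abs_le (x - y)]
    calc |1 - (1 - y ^ 2) ^ 4 - 1| = (1 - y ^ 2) ^ 4 := by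
          rw [show 1 - (1 - y ^ 2) ^ 4 - 1 = -(1 - y ^ 2) ^ 4 by ring, abs_neg,
            abs_of_nonneg (by positivity)]
      _ ≤ (2 * |y - x|) ^ 4 := by gcongr
      _ = 16 * |y - x| ^ 4 := by ring
  · simp

lemma hasDerivAt_gfun (x : ℝ) : HasDerivAt gfun (gfunDeriv x) x := by
  rcases lt_trichotomy |x| 1 with h | h | h
  · have hpoly : HasDerivAt (fun y : ℝ => 1 - (1 - y ^ 2) ^ 4) (8 * x * (1 - x ^ 2) ^ 3) x := by
      refine ((((hasDerivAt_pow 2 x).const_sub 1).pow 4).const_sub 1).congr_deriv ?_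
      norm_num; ring
    rw [gfunDeriv, if_pos h.le]
    refine hpoly.congr_of_eventuallyEq ?_
    filter_upwards [(isOpen_lt continuous_abs continuous_const).mem_nhds h] with y hy
    exact if_pos hy.le
  · rw [gfunDeriv_eq_zero_of_one_le_abs h.ge]
    exact hasDerivAt_gfun_of_abs_eq_one h
  · rw [gfunDeriv_eq_zero_of_one_le_abs h.le]
    refine (hasDerivAt_const x 1).congr_of_eventuallyEq ?_
    filter_upwards [(isOpen_lt continuous_const continuous_abs).mem_nhds h] with y hy
    exact if_neg hy.not_ge

lemma monotoneOn_gfun : MonotoneOn gfun (Ici 0) :=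
  monotoneOn_of_hasDerivWithinAt_nonneg (convex_Ici 0)
    (fun x _ => (hasDerivAt_gfun x).continuousAt.continuousWithinAt)
    (fun _ _ => (hasDerivAt_gfun _).hasDerivWithinAt)
    (fun _ hx => gfunDeriv_nonneg (interior_subset hx))

lemma gfunDeriv_eq_comp_projIcc :
    gfunDeriv = fun x => 8 * (projIcc (-1) 1 (by norm_num) x : ℝ) *
      (1 - (projIcc (-1) 1 (by norm_num) x : ℝ) ^ 2) ^ 3 := by
  ext x
  rcases le_or_gt x (-1) with h | h
  · rw [projIcc_of_le_left _ h, gfunDeriv_eq_zero_of_one_le_abs (le_abs.2 (.inr (by linarith)))]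
    norm_num
  rcases le_or_gt x 1 with h' | h'
  · rw [projIcc_of_mem _ ⟨h.le, h'⟩, gfunDeriv, if_pos (abs_le.2 ⟨h.le, h'⟩)]
  · rw [projIcc_of_right_le _ h'.le, gfunDeriv_eq_zero_of_one_le_abs (le_abs.2 (.inl h'.le))]
    norm_num

lemma exists_lipschitzWith_gfunDeriv : ∃ K, LipschitzWith K gfunDeriv := by
  have hpoly : ContDiff ℝ 1 fun x : ℝ => 8 * x * (1 - x ^ 2) ^ 3 := by fun_prop
  obtain ⟨K, hK⟩ :=
    hpoly.contDiffOn.exists_lipschitzOnWith one_ne_zero (convex_Icc (-1) 1) isCompact_Icc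
  exact ⟨K * 1, gfunDeriv_eq_comp_projIcc ▸ hK.to_restrict.comp (LipschitzWith.projIcc _)⟩

lemma tendsto_atTop_of_hasDerivAt_ge {f f' : ℝ → ℝ} (hf : ∀ t, HasDerivAt f (f' t) t)
    {c : ℝ} (hc : 0 < c) (hf' : ∀ t ≥ 0, c ≤ f' t) : Tendsto f atTop atTop := by
  have hlin : ∀ t ≥ 0, c * t + f 0 ≤ f t := by
    intro t ht
    have := (convex_Ici (0 : ℝ)).mul_sub_le_image_sub_of_le_deriv
      (fun x _ => (hf x).continuousAt.continuousWithinAt)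
      (fun x _ => (hf x).differentiableAt.differentiableWithinAt)
      (fun x hx => (hf x).deriv ▸ hf' x (interior_subset hx)) 0 self_mem_Ici t ht ht
    linarith
  refine tendsto_atTop_mono' atTop ?_ (tendsto_atTop_add_const_right _ (f 0)
    (tendsto_id.const_mul_atTop hc))
  filter_upwards [eventually_ge_atTop 0] with t ht using hlin t ht

namespace SolvesCE

variable {q p : ℝ → ℝ}

lemma hasDerivAt_snd (hsol : SolvesCE q p) (t : ℝ) : HasDerivAt p (-gfunDeriv (q t)) t :=
  (hasDerivAt_gfun (q t)).deriv ▸ (hsol t).2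

lemma hex_eq (hsol : SolvesCE q p) (t : ℝ) : Hex (q t) (p t) = Hex (q 0) (p 0) := by
  have hE (s : ℝ) : HasDerivAt (fun t => Hex (q t) (p t)) 0 s := by
    refine (((hsol.hasDerivAt_snd s).pow 2).div_const 2 |>.add
      ((hasDerivAt_gfun (q s)).comp s (hsol s).1)).congr_deriv ?_
    ring
  exact is_const_of_deriv_eq_zero (fun s => (hE s).differentiableAt) (fun s => (hE s).deriv) t 0

-- `(q s, 0)` is a rest point of the Lipschitz field `(x, u) ↦ (u, -g'(x))`; apply uniqueness.
lemma fst_eq_of_snd_eq_zero (hsol : SolvesCE q p) {s : ℝ} (hq : 1 ≤ |q s|) (hp : p s = 0)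
    (t : ℝ) : q t = q s := by
  obtain ⟨K, hK⟩ := exists_lipschitzWith_gfunDeriv
  let v : ℝ → ℝ × ℝ → ℝ × ℝ := fun _ z => (z.2, -gfunDeriv z.1)
  have hv (t : ℝ) : LipschitzOnWith (max 1 (K * 1)) (v t) univ :=
    (LipschitzWith.prod_snd.prodMk (hK.comp LipschitzWith.prod_fst).neg).lipschitzOnWith
  have hflow : (fun t => (q t, p t)) = fun _ => (q s, 0) := by
    refine ODE_solution_unique_univ hv (fun t => ⟨(hsol t).1.prodMk (hsol.hasDerivAt_snd t),
      mem_univ _⟩) (fun t => ⟨?_, mem_univ _⟩) (t₀ := s) (by simp [hp])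
    convert hasDerivAt_const t (q s, (0 : ℝ))
    simp [v, gfunDeriv_eq_zero_of_one_le_abs hq]
  exact congrArg Prod.fst (congrFun hflow t)

lemma strictMono_fst (hsol : SolvesCE q p) (hp : ∀ t, 0 < p t) : StrictMono q :=
  strictMono_of_hasDerivAt_pos (fun t => (hsol t).1) hp

lemma snd_pos (hsol : SolvesCE q p) (h0 : 0 < p 0)
    (hg : ∀ t, gfun (q t) < Hex (q 0) (p 0)) (t : ℝ) : 0 < p t := by
  have hne (s : ℝ) : p s ≠ 0 := by
    intro hs
    have := hsol.hex_eq s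
    rw [Hex, hs] at this
    linarith [hg s]
  by_contra! ht
  have hcont : Continuous p := continuous_iff_continuousAt.2 fun s => (hsol s).2.continuousAt
  obtain ⟨s, -, hs⟩ := intermediate_value_uIcc hcont.continuousOn
    (mem_uIcc.2 (Or.inr ⟨ht, h0.le⟩))
  exact hne s hs

-- `p² / 2 = H - g(q) ≥ H - b` bounds the speed away from zero.
lemma tendsto_fst_atTop (hsol : SolvesCE q p) (hp : ∀ t, 0 < p t) {b : ℝ}
    (hb : b < Hex (q 0) (p 0)) (hg : ∀ t ≥ 0, gfun (q t) ≤ b) : Tendsto q atTop atTop := by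
  refine tendsto_atTop_of_hasDerivAt_ge (fun t => (hsol t).1)
    (Real.sqrt_pos.2 (by linarith : 0 < 2 * (Hex (q 0) (p 0) - b))) fun t ht => ?_
  have := hsol.hex_eq t
  rw [Hex] at this
  exact Real.sqrt_le_iff.2 ⟨(hp t).le, by linarith [hg t ht]⟩

lemma abs_fst_lt_one (hsol : SolvesCE q p) (h0 : |q 0| < 1) (hE : Hex (q 0) (p 0) ≤ 1)
    (t : ℝ) : |q t| < 1 := by
  by_contra! ht
  have hpt : p t = 0 := by
    have := hsol.hex_eq t
    rw [Hex, gfun_eq_one_of_one_le_abs ht] at this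
    nlinarith [sq_nonneg (p t)]
  exact h0.not_ge (hsol.fst_eq_of_snd_eq_zero ht hpt 0 ▸ ht)

lemma concaveOn_fst (hsol : SolvesCE q p) (hq : ∀ t ≥ 0, 0 ≤ q t) : ConcaveOn ℝ (Ici 0) q :=
  concaveOn_of_hasDerivWithinAt2_nonpos (convex_Ici 0)
    (fun t _ => (hsol t).1.continuousAt.continuousWithinAt)
    (fun t _ => (hsol t).1.hasDerivWithinAt)
    (fun t _ => (hsol.hasDerivAt_snd t).hasDerivWithinAt)
    (fun t ht => neg_nonpos.2 (gfunDeriv_nonneg (hq t (interior_subset ht))))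

lemma tendsto_fst_nhds_one (hsol : SolvesCE q p) (hp : ∀ t, 0 < p t)
    (hE : Hex (q 0) (p 0) = 1) (hq0 : 0 ≤ q 0) (hq1 : ∀ t, q t < 1) :
    Tendsto q atTop (𝓝 1) := by
  have hmono := (hsol.strictMono_fst hp).monotone
  refine tendsto_atTop_isLUB hmono ⟨?_, fun b hb => ?_⟩
  · rintro _ ⟨t, rfl⟩
    exact (hq1 t).le
  by_contra! hb1
  have hqb (t : ℝ) : q t ≤ b := hb ⟨t, rfl⟩
  have hb0 : 0 ≤ b := hq0.trans (hqb 0)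
  have hesc := hsol.tendsto_fst_atTop hp
    (hE ▸ gfun_lt_one_of_abs_lt_one (abs_lt.2 ⟨by linarith, hb1⟩))
    fun t ht => monotoneOn_gfun (hq0.trans (hmono ht)) hb0 (hqb t)
  obtain ⟨t, ht⟩ := (hesc.eventually_gt_atTop b).exists
  exact (hqb t).not_gt ht

end SolvesCE

theorem stmt_17_general (p₀ : ℝ)
    (q p : ℝ → ℝ) (hsol : SolvesCE q p) (hq0 : q 0 = 0) (hp0 : p 0 = p₀) :
    (Real.sqrt 2 < p₀ → StrictMonoOn q (Set.Ici 0) ∧ Tendsto q atTop atTop) ∧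
    (p₀ = Real.sqrt 2 → StrictMonoOn q (Set.Ici 0) ∧ ConcaveOn ℝ (Set.Ici 0) q ∧
      Tendsto q atTop (nhds 1)) := by
  have hE : Hex (q 0) (p 0) = p₀ ^ 2 / 2 := by simp [Hex, hq0, hp0, gfun_zero]
  refine ⟨fun hp₀ => ?_, fun hp₀ => ?_⟩
  · have hE1 : 1 < Hex (q 0) (p 0) := by
      rw [hE]
      nlinarith [Real.sq_sqrt zero_le_two, Real.sqrt_nonneg 2]
    have hp := hsol.snd_pos (hp0 ▸ (Real.sqrt_nonneg 2).trans_lt hp₀)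
      fun t => (gfun_le_one _).trans_lt hE1
    exact ⟨(hsol.strictMono_fst hp).strictMonoOn _,
      hsol.tendsto_fst_atTop hp hE1 fun t _ => gfun_le_one _⟩
  · have hE1 : Hex (q 0) (p 0) = 1 := by
      rw [hE, hp₀, Real.sq_sqrt zero_le_two]
      norm_num
    have hq1 := hsol.abs_fst_lt_one (by simp [hq0]) hE1.le
    have hp := hsol.snd_pos (by rw [hp0, hp₀]; positivity)
      fun t => hE1 ▸ gfun_lt_one_of_abs_lt_one (hq1 t)
    have hmono := hsol.strictMono_fst hp
    exact ⟨hmono.strictMonoOn _, hsol.concaveOn_fst fun t ht => hq0 ▸ hmono.monotone ht,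
      hsol.tendsto_fst_nhds_one hp hE1 hq0.ge fun t => (abs_lt.1 (hq1 t)).2⟩

/-- Lemma 5.10: behavior of the trajectory issued from `(0, p₀)` with
`p₀ ∈ [√2, 2)`: escape to `+∞` if `p₀ > √2`; strictly increasing, concave
convergence to `1` if `p₀ = √2`. -/
theorem stmt_17 (p₀ : ℝ) (hp₀ : p₀ ∈ Set.Ico (Real.sqrt 2) 2)
    (q p : ℝ → ℝ) (hsol : SolvesCE q p) (hq0 : q 0 = 0) (hp0 : p 0 = p₀) :
    (Real.sqrt 2 < p₀ → StrictMonoOn q (Set.Ici 0) ∧ Tendsto q atTop atTop) ∧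
    (p₀ = Real.sqrt 2 → StrictMonoOn q (Set.Ici 0) ∧ ConcaveOn ℝ (Set.Ici 0) q ∧
      Tendsto q atTop (nhds 1)) :=
  stmt_17_general p₀ q p hsol hq0 hp0
end
end
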